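/- arXiv:2109.10659 — 2 statements merged into one kernel-verified Lean document; each statement's English description precedes it below -/
import Mathlib

section
/- For k ∈ ℕ and δ ∈ (0,1), define α_k = sup{α ∈ (0,1) : γ(k/2, αk/2)/Γ(k/2) ≤ δ}, where γ is the lower incomplete gamma function. Then the sequence {α_k} is monotonically increasing in k and converges to 1 as k → ∞. -/
/-- `α_k = sup{α ∈ (0,1) : γ(k/2, αk/2)/Γ(k/2) ≤ δ}` with `γ` the lower incomplete
gamma function. -/
noncomputable def alphaSeq (δ : ℝ) (k : ℕ) : ℝ :=
  sSup {α : ℝ | α ∈ Set.Ioo (0 : ℝ) 1 ∧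
    (∫ t in Set.Ioo (0 : ℝ) (α * k / 2), t ^ ((k : ℝ) / 2 - 1) * Real.exp (-t)) /
      Real.Gamma ((k : ℝ) / 2) ≤ δ}

/-!
Write `κ_s(t) = t^(s-1) e^(-st)`, so that `γ(s, xs) / Γ(s) = ∫_0^x κ_s / ∫_0^∞ κ_s` is
the distribution function at `x` of the Gamma law with shape `s` and mean `1`. Since
`κ_s(t) = e^(-s ν(t)) / t` with `ν(t) = t - log t`, we have `κ_b = κ_a e^(-(b-a) ν)`.

Monotonicity of `α_k` comes from the monotonicity of this distribution function in `s` for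
`x ≤ 1`. At `x = 1` it is the inequality
`(∫_0^1 κ_b)(∫_1^∞ κ_a) ≤ (∫_0^1 κ_a)(∫_1^∞ κ_b)`. Substituting for `w > 1` the point `t < 1`
with `ν(t) = ν(w)` turns `∫_1^∞ κ_s` into `∫_0^1 κ_s(t) (1 - t)/(w(t) - 1) dt`, and the
inequality becomes Chebyshev's integral inequality for the weight `κ_a` and the two increasing
functions `e^(-(b-a) ν)` and `(1 - t)/(w(t) - 1)`. For `x < 1`, with `C_s = ∫_0^∞ κ_s`, the
cross-multiplied difference `C_a ∫_0^x κ_b - C_b ∫_0^x κ_a` is `∫_0^x κ_a (C_a e^(-(b-a) ν) - C_b)`,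
whose integrand changes sign at most once, from `-` to `+`; so it is at most the larger of `0`
and its value at `x = 1`.

Convergence to `1` is the law of large numbers in the form of Chebyshev's inequality: the law
has mean `1` and variance `1/s`, so its distribution function at `β < 1` is at most
`1 / (s (1 - β)^2)`.
-/

open Real Set MeasureTheory Filter Topology

noncomputable section

theorem setIntegral_mul_setIntegral_le_of_monotoneOn {α : Type*} [LinearOrder α]
    [MeasurableSpace α] {μ : Measure α} [SFinite μ] {s : Set α} (hs : MeasurableSet s)
    {w f g : α → ℝ} (hw : ∀ x ∈ s, 0 ≤ w x) (hf : MonotoneOn f s) (hg : MonotoneOn g s)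
    (hw_int : IntegrableOn w s μ) (hwf : IntegrableOn (fun x => w x * f x) s μ)
    (hwg : IntegrableOn (fun x => w x * g x) s μ)
    (hwfg : IntegrableOn (fun x => w x * f x * g x) s μ) :
    (∫ x in s, w x * f x ∂μ) * ∫ x in s, w x * g x ∂μ ≤
      (∫ x in s, w x ∂μ) * ∫ x in s, w x * f x * g x ∂μ := by
  set ν := μ.restrict s
  -- Integrate `w x w y (f x - f y) (g x - g y) ≥ 0` over `s × s`.
  have hpos : 0 ≤ ∫ z : α × α, (w z.1 * f z.1 * g z.1) * w z.2
      - (w z.1 * f z.1) * (w z.2 * g z.2) - (w z.1 * g z.1) * (w z.2 * f z.2)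
      + w z.1 * (w z.2 * f z.2 * g z.2) ∂ν.prod ν := by
    rw [Measure.prod_restrict]
    refine setIntegral_nonneg (hs.prod hs) fun z ⟨hz₁, hz₂⟩ => ?_
    have hfg : 0 ≤ (f z.1 - f z.2) * (g z.1 - g z.2) := by
      rcases le_total z.1 z.2 with h | h
      · exact mul_nonneg_of_nonpos_of_nonpos (sub_nonpos.2 (hf hz₁ hz₂ h))
          (sub_nonpos.2 (hg hz₁ hz₂ h))
      · exact mul_nonneg (sub_nonneg.2 (hf hz₂ hz₁ h)) (sub_nonneg.2 (hg hz₂ hz₁ h))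
    calc (0 : ℝ) ≤ w z.1 * w z.2 * ((f z.1 - f z.2) * (g z.1 - g z.2)) :=
          mul_nonneg (mul_nonneg (hw _ hz₁) (hw _ hz₂)) hfg
      _ = _ := by ring
  rw [integral_add, integral_sub, integral_sub, integral_prod_mul (fun x => w x * f x * g x) w,
    integral_prod_mul (fun x => w x * f x) (fun x => w x * g x),
    integral_prod_mul (fun x => w x * g x) (fun x => w x * f x),
    integral_prod_mul w (fun x => w x * f x * g x)] at hpos
  · linarith
  exacts [hwfg.mul_prod hw_int, hwf.mul_prod hwg, (hwfg.mul_prod hw_int).sub (hwf.mul_prod hwg),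
    hwg.mul_prod hwf, ((hwfg.mul_prod hw_int).sub (hwf.mul_prod hwg)).sub (hwg.mul_prod hwf),
    hw_int.mul_prod hwfg]

theorem setIntegral_Ioo_le_max_of_monotoneOn {w B : ℝ → ℝ} {a b x : ℝ} (hxb : x ≤ b)
    (hw : ∀ t ∈ Ioo a b, 0 ≤ w t) (hB : MonotoneOn B (Ioo a b))
    (hint : IntegrableOn (fun t => w t * B t) (Ioo a b)) :
    ∫ t in Ioo a x, w t * B t ≤ max 0 (∫ t in Ioo a b, w t * B t) := by
  have hsub : Ioo a x ⊆ Ioo a b := Ioo_subset_Ioo_right hxb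
  by_cases hneg : ∀ t ∈ Ioo a x, B t ≤ 0
  · exact (setIntegral_nonpos measurableSet_Ioo fun t ht =>
      mul_nonpos_of_nonneg_of_nonpos (hw t (hsub ht)) (hneg t ht)).trans (le_max_left _ _)
  · -- `B` is positive somewhere on `(a, x)`, hence on all of `[x, b)`.
    simp only [not_forall, not_le] at hneg
    obtain ⟨t₀, ht₀, hBt₀⟩ := hneg
    have hrest : 0 ≤ ∫ t in Ioo a b \ Ioo a x, w t * B t := by
      refine setIntegral_nonneg (measurableSet_Ioo.diff measurableSet_Ioo) fun t ⟨ht, htx⟩ => ?_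
      have ht₀t : t₀ ≤ t := by
        by_contra! h
        exact htx ⟨ht.1, h.trans ht₀.2⟩
      exact mul_nonneg (hw t ht) (hBt₀.le.trans (hB (hsub ht₀) ht ht₀t))
    rw [setIntegral_sdiff measurableSet_Ioo hint hsub] at hrest
    exact (sub_nonneg.1 hrest).trans (le_max_right _ _)

def subLog (t : ℝ) : ℝ := t - log t

lemma hasDerivAt_subLog {t : ℝ} (ht : t ≠ 0) : HasDerivAt subLog (1 - t⁻¹) t :=
  (hasDerivAt_id t).sub (hasDerivAt_log ht)

lemma continuousOn_subLog : ContinuousOn subLog (Ioi 0) :=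
  fun _ ht => (hasDerivAt_subLog (ne_of_gt ht)).continuousAt.continuousWithinAt

lemma subLog_one : subLog 1 = 1 := by simp [subLog]

lemma one_lt_subLog {t : ℝ} (ht : 0 < t) (ht1 : t ≠ 1) : 1 < subLog t := by
  have := log_lt_sub_one_of_pos ht ht1
  rw [subLog]; linarith

lemma strictMonoOn_subLog : StrictMonoOn subLog (Ici 1) := by
  refine strictMonoOn_of_deriv_pos (convex_Ici 1)
    (continuousOn_subLog.mono fun t (ht : 1 ≤ t) => show 0 < t by linarith) fun t ht => ?_
  rw [interior_Ici] at ht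
  rw [(hasDerivAt_subLog (by linarith [mem_Ioi.1 ht])).deriv, sub_pos]
  exact inv_lt_one_of_one_lt₀ ht

lemma strictAntiOn_subLog : StrictAntiOn subLog (Ioc 0 1) := by
  refine strictAntiOn_of_deriv_neg (convex_Ioc 0 1)
    (continuousOn_subLog.mono Ioc_subset_Ioi_self) fun t ht => ?_
  rw [interior_Ioc] at ht
  rw [(hasDerivAt_subLog ht.1.ne').deriv, sub_neg]
  exact (one_lt_inv₀ ht.1).2 ht.2

lemma surjOn_subLog_Ioi : SurjOn subLog (Ioi 1) (Ioi 1) := by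
  intro v (hv : 1 < v)
  have hlarge : v < subLog (exp v) := by
    rw [subLog, log_exp]
    nlinarith [quadratic_le_exp_of_nonneg (zero_le_one.trans hv.le)]
  obtain ⟨w, hw, rfl⟩ := intermediate_value_Ioo (one_le_exp (zero_le_one.trans hv.le))
    (continuousOn_subLog.mono fun t ht => zero_lt_one.trans_le ht.1)
    (show v ∈ Ioo (subLog 1) (subLog (exp v)) by rw [subLog_one]; exact ⟨hv, hlarge⟩)
  exact ⟨w, hw.1, rfl⟩

lemma surjOn_subLog_Ioo : SurjOn subLog (Ioo 0 1) (Ioi 1) := by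
  intro v (hv : 1 < v)
  have hlarge : v < subLog (exp (-v)) := by
    rw [subLog, log_exp]
    linarith [exp_pos (-v)]
  obtain ⟨t, ht, rfl⟩ := intermediate_value_Ioo' (exp_le_one_iff.2 (by linarith))
    (continuousOn_subLog.mono fun t ht => (exp_pos _).trans_le ht.1)
    (show v ∈ Ioo (subLog 1) (subLog (exp (-v))) by rw [subLog_one]; exact ⟨hv, hlarge⟩)
  exact ⟨t, ⟨(exp_pos _).trans ht.1, ht.2⟩, rfl⟩

def subLogInv : ℝ → ℝ := Function.invFunOn subLog (Ioi 1)

lemma one_lt_subLogInv {v : ℝ} (hv : 1 < v) : 1 < subLogInv v :=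
  surjOn_subLog_Ioi.mapsTo_invFunOn hv

lemma subLog_subLogInv {v : ℝ} (hv : 1 < v) : subLog (subLogInv v) = v :=
  surjOn_subLog_Ioi.rightInvOn_invFunOn hv

lemma subLogInv_subLog {w : ℝ} (hw : 1 < w) : subLogInv (subLog w) = w :=
  (strictMonoOn_subLog.injOn.mono Ioi_subset_Ici_self).leftInvOn_invFunOn hw

lemma strictMonoOn_subLogInv : StrictMonoOn subLogInv (Ioi 1) := by
  intro v hv v' hv' hlt
  rw [← strictMonoOn_subLog.lt_iff_lt (one_lt_subLogInv hv).le (one_lt_subLogInv hv').le,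
    subLog_subLogInv hv, subLog_subLogInv hv']
  exact hlt

lemma hasDerivAt_subLogInv {v : ℝ} (hv : 1 < v) :
    HasDerivAt subLogInv (1 - (subLogInv v)⁻¹)⁻¹ v := by
  have hw := one_lt_subLogInv hv
  have hcont : ContinuousAt subLogInv v := by
    refine strictMonoOn_subLogInv.continuousAt_of_image_mem_nhds (Ioi_mem_nhds hv)
      (mem_of_superset (Ioi_mem_nhds hw) fun w hw' => ?_)
    exact ⟨subLog w, one_lt_subLog (by linarith [mem_Ioi.1 hw']) (ne_of_gt hw'),
      subLogInv_subLog hw'⟩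
  refine HasDerivAt.of_local_left_inverse hcont (hasDerivAt_subLog (by positivity)) ?_ ?_
  · rw [sub_ne_zero]
    exact (inv_lt_one_of_one_lt₀ hw).ne'
  · filter_upwards [Ioi_mem_nhds hv] with u hu using subLog_subLogInv hu

def conjPoint (t : ℝ) : ℝ := subLogInv (subLog t)

section conjPoint

variable {t : ℝ}

lemma one_lt_conjPoint (ht : t ∈ Ioo 0 1) : 1 < conjPoint t :=
  one_lt_subLogInv (one_lt_subLog ht.1 ht.2.ne)

lemma subLog_conjPoint (ht : t ∈ Ioo 0 1) : subLog (conjPoint t) = subLog t :=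
  subLog_subLogInv (one_lt_subLog ht.1 ht.2.ne)

lemma hasDerivAt_conjPoint (ht : t ∈ Ioo 0 1) :
    HasDerivAt conjPoint ((1 - (conjPoint t)⁻¹)⁻¹ * (1 - t⁻¹)) t :=
  (hasDerivAt_subLogInv (one_lt_subLog ht.1 ht.2.ne)).comp t (hasDerivAt_subLog ht.1.ne')

lemma strictAntiOn_conjPoint : StrictAntiOn conjPoint (Ioo 0 1) := fun _ ha _ hb hab =>
  strictMonoOn_subLogInv (one_lt_subLog hb.1 hb.2.ne) (one_lt_subLog ha.1 ha.2.ne)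
    (strictAntiOn_subLog ⟨ha.1, ha.2.le⟩ ⟨hb.1, hb.2.le⟩ hab)

lemma image_conjPoint : conjPoint '' Ioo 0 1 = Ioi 1 := by
  refine (image_subset_iff.2 fun t ht => one_lt_conjPoint ht).antisymm fun w (hw : 1 < w) => ?_
  obtain ⟨t, ht, hteq⟩ := surjOn_subLog_Ioo (one_lt_subLog (by linarith) hw.ne')
  exact ⟨t, ht, show subLogInv (subLog t) = w by rw [hteq, subLogInv_subLog hw]⟩

lemma mul_conjPoint_le_one (ht : t ∈ Ioo 0 1) : t * conjPoint t ≤ 1 := by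
  set w := conjPoint t
  have hw : 1 < w := one_lt_conjPoint ht
  have hlog : log w ≤ (w - w⁻¹) / 2 := by
    rw [← sinh_log (by positivity)]
    exact self_le_sinh_iff.2 (log_nonneg hw.le)
  have hsub : subLog w⁻¹ ≤ subLog t := by
    rw [← subLog_conjPoint ht, subLog, subLog, log_inv]
    linarith
  rw [strictAntiOn_subLog.le_iff_ge ⟨by positivity, inv_le_one_of_one_le₀ hw.le⟩
    ⟨ht.1, ht.2.le⟩] at hsub
  calc t * w ≤ w⁻¹ * w := by gcongr
    _ = 1 := inv_mul_cancel₀ (by positivity)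

end conjPoint

def conjWeight (t : ℝ) : ℝ := (1 - t) / (conjPoint t - 1)

lemma monotoneOn_conjWeight : MonotoneOn conjWeight (Ioo 0 1) := by
  have hderiv : ∀ t ∈ Ioo (0 : ℝ) 1, HasDerivAt conjWeight
      ((-1 * (conjPoint t - 1) - (1 - t) * ((1 - (conjPoint t)⁻¹)⁻¹ * (1 - t⁻¹))) /
        (conjPoint t - 1) ^ 2) t := fun t ht =>
    ((hasDerivAt_id t).const_sub 1).div ((hasDerivAt_conjPoint ht).sub_const 1)
      (sub_ne_zero.2 (one_lt_conjPoint ht).ne')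
  refine monotoneOn_of_deriv_nonneg (convex_Ioo 0 1)
    (fun t ht => (hderiv t ht).continuousAt.continuousWithinAt)
    (fun t ht => (hderiv t (interior_subset ht)).differentiableAt.differentiableWithinAt)
    fun t ht => ?_
  rw [interior_Ioo] at ht
  have hw := one_lt_conjPoint ht
  have htw := mul_conjPoint_le_one ht
  have key : -1 * (conjPoint t - 1) - (1 - t) * ((1 - (conjPoint t)⁻¹)⁻¹ * (1 - t⁻¹)) =
      (conjPoint t - t) * (1 - t * conjPoint t) / (t * (conjPoint t - 1)) := by
    have : conjPoint t - 1 ≠ 0 := by linarith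
    have : conjPoint t ≠ 0 := by linarith
    have : t ≠ 0 := ht.1.ne'
    field_simp
    ring
  rw [(hderiv t ht).deriv, key]
  exact div_nonneg (div_nonneg (mul_nonneg (by linarith [ht.2]) (by linarith))
    (mul_nonneg ht.1.le (by linarith))) (sq_nonneg _)

def gammaKernel (s t : ℝ) : ℝ := t ^ (s - 1) * exp (-(s * t))

section gammaKernel

variable {s t : ℝ}

lemma gammaKernel_nonneg (ht : 0 ≤ t) : 0 ≤ gammaKernel s t := by
  unfold gammaKernel; positivity

lemma gammaKernel_eq_exp_div (ht : 0 < t) : gammaKernel s t = exp (-(s * subLog t)) / t := by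
  rw [gammaKernel, subLog, rpow_sub_one ht.ne', rpow_def_of_pos ht, div_mul_eq_mul_div, ← exp_add]
  ring_nf

lemma gammaKernel_add {a d : ℝ} (ht : 0 < t) :
    gammaKernel (a + d) t = gammaKernel a t * exp (-(d * subLog t)) := by
  rw [gammaKernel_eq_exp_div ht, gammaKernel_eq_exp_div ht, div_mul_eq_mul_div, ← exp_add]
  ring_nf

lemma integrableOn_rpow_mul_exp_neg_mul_Ioi {a r : ℝ} (ha : 0 < a) (hr : 0 < r) :
    IntegrableOn (fun t => t ^ (a - 1) * exp (-(r * t))) (Ioi 0) := by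
  simpa [rpow_one, neg_mul] using
    integrableOn_rpow_mul_exp_neg_mul_rpow (by linarith : -1 < a - 1) zero_lt_one hr

lemma integrableOn_gammaKernel (hs : 0 < s) : IntegrableOn (gammaKernel s) (Ioi 0) :=
  integrableOn_rpow_mul_exp_neg_mul_Ioi hs hs

lemma integral_gammaKernel (hs : 0 < s) :
    ∫ t in Ioi 0, gammaKernel s t = (1 / s) ^ s * Gamma s :=
  integral_rpow_mul_exp_neg_mul_Ioi hs hs

lemma integral_gammaKernel_pos (hs : 0 < s) : 0 < ∫ t in Ioi 0, gammaKernel s t := by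
  rw [integral_gammaKernel hs]
  have := Gamma_pos_of_pos hs
  positivity

lemma abs_deriv_conjPoint_mul_gammaKernel (ht : t ∈ Ioo 0 1) :
    |(1 - (conjPoint t)⁻¹)⁻¹ * (1 - t⁻¹)| * gammaKernel s (conjPoint t) =
      gammaKernel s t * conjWeight t := by
  obtain ⟨ht0, ht1⟩ := ht
  have hw := one_lt_conjPoint ⟨ht0, ht1⟩
  have hw1 : conjPoint t - 1 ≠ 0 := by linarith
  have hderiv : (1 - (conjPoint t)⁻¹)⁻¹ * (1 - t⁻¹) =
      -(conjPoint t * (1 - t) / (t * (conjPoint t - 1))) := by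
    field_simp
    ring
  rw [hderiv, abs_neg, abs_of_nonneg (div_nonneg (mul_nonneg (by linarith) (by linarith))
      (mul_nonneg ht0.le (by linarith))),
    gammaKernel_eq_exp_div (by linarith), gammaKernel_eq_exp_div ht0,
    subLog_conjPoint ⟨ht0, ht1⟩, conjWeight]
  field_simp

lemma integral_Ioi_one_gammaKernel :
    ∫ w in Ioi 1, gammaKernel s w = ∫ t in Ioo 0 1, gammaKernel s t * conjWeight t := by
  rw [← image_conjPoint, integral_image_eq_integral_abs_deriv_smul measurableSet_Ioo
    (fun t ht => (hasDerivAt_conjPoint ht).hasDerivWithinAt) strictAntiOn_conjPoint.injOn]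
  exact setIntegral_congr_fun measurableSet_Ioo fun t ht =>
    abs_deriv_conjPoint_mul_gammaKernel ht

lemma integrableOn_gammaKernel_mul_conjWeight (hs : 0 < s) :
    IntegrableOn (fun t => gammaKernel s t * conjWeight t) (Ioo 0 1) := by
  have h := (integrableOn_gammaKernel hs).mono_set (Ioi_subset_Ioi zero_le_one)
  rw [← image_conjPoint, integrableOn_image_iff_integrableOn_abs_deriv_smul measurableSet_Ioo
    (fun t ht => (hasDerivAt_conjPoint ht).hasDerivWithinAt) strictAntiOn_conjPoint.injOn] at h
  exact h.congr_fun (fun t ht => abs_deriv_conjPoint_mul_gammaKernel ht) measurableSet_Ioo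

lemma integral_gammaKernel_eq_add (hs : 0 < s) :
    ∫ t in Ioi 0, gammaKernel s t =
      (∫ t in Ioo 0 1, gammaKernel s t) + ∫ t in Ioi 1, gammaKernel s t := by
  rw [← Ioc_union_Ioi_eq_Ioi zero_le_one, setIntegral_union (Ioc_disjoint_Ioi le_rfl)
    measurableSet_Ioi ((integrableOn_gammaKernel hs).mono_set Ioc_subset_Ioi_self)
    ((integrableOn_gammaKernel hs).mono_set (Ioi_subset_Ioi zero_le_one)),
    integral_Ioc_eq_integral_Ioo]

end gammaKernel

lemma monotoneOn_exp_neg_mul_subLog {d : ℝ} (hd : 0 ≤ d) :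
    MonotoneOn (fun t => exp (-(d * subLog t))) (Ioo 0 1) := fun _ hx _ hy hxy =>
  exp_le_exp.2 <| neg_le_neg <| mul_le_mul_of_nonneg_left
    (strictAntiOn_subLog.antitoneOn ⟨hx.1, hx.2.le⟩ ⟨hy.1, hy.2.le⟩ hxy) hd

theorem integral_Ioo_gammaKernel_mul_integral_Ioi_le {a b : ℝ} (ha : 0 < a) (hab : a ≤ b) :
    (∫ t in Ioo 0 1, gammaKernel b t) * ∫ t in Ioi 1, gammaKernel a t ≤
      (∫ t in Ioo 0 1, gammaKernel a t) * ∫ t in Ioi 1, gammaKernel b t := by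
  have hb : ∀ t ∈ Ioo (0 : ℝ) 1,
      gammaKernel b t = gammaKernel a t * exp (-((b - a) * subLog t)) := fun t ht => by
    rw [← gammaKernel_add ht.1, add_sub_cancel]
  have hb' : ∀ t ∈ Ioo (0 : ℝ) 1, gammaKernel b t * conjWeight t =
      gammaKernel a t * exp (-((b - a) * subLog t)) * conjWeight t := fun t ht => by
    rw [hb t ht]
  have hint : IntegrableOn (gammaKernel a) (Ioo 0 1) :=
    (integrableOn_gammaKernel ha).mono_set Ioo_subset_Ioi_self
  rw [integral_Ioi_one_gammaKernel, integral_Ioi_one_gammaKernel,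
    setIntegral_congr_fun measurableSet_Ioo hb, setIntegral_congr_fun measurableSet_Ioo hb']
  exact setIntegral_mul_setIntegral_le_of_monotoneOn measurableSet_Ioo
    (fun t ht => gammaKernel_nonneg ht.1.le) (monotoneOn_exp_neg_mul_subLog (sub_nonneg.2 hab))
    monotoneOn_conjWeight hint
    (((integrableOn_gammaKernel (ha.trans_le hab)).mono_set Ioo_subset_Ioi_self).congr_fun hb
      measurableSet_Ioo)
    (integrableOn_gammaKernel_mul_conjWeight ha)
    ((integrableOn_gammaKernel_mul_conjWeight (ha.trans_le hab)).congr_fun hb' measurableSet_Ioo)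

def unitMeanGammaCDF (s x : ℝ) : ℝ :=
  (∫ t in Ioo 0 x, gammaKernel s t) / ∫ t in Ioi 0, gammaKernel s t

theorem unitMeanGammaCDF_le_of_le {a b x : ℝ} (ha : 0 < a) (hab : a ≤ b) (hx : x ≤ 1) :
    unitMeanGammaCDF b x ≤ unitMeanGammaCDF a x := by
  have hb : 0 < b := ha.trans_le hab
  set C : ℝ → ℝ := fun s => ∫ t in Ioi 0, gammaKernel s t
  set B : ℝ → ℝ := fun t => C a * exp (-((b - a) * subLog t)) - C b
  have hint : ∀ {s}, 0 < s → ∀ y ≤ 1, IntegrableOn (gammaKernel s) (Ioo 0 y) := fun hs y hy =>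
    (integrableOn_gammaKernel hs).mono_set ((Ioo_subset_Ioo_right hy).trans Ioo_subset_Ioi_self)
  have hkernel : ∀ t ∈ Ioo (0 : ℝ) 1,
      gammaKernel a t * B t = C a * gammaKernel b t - C b * gammaKernel a t :=
    fun t ht => by rw [← add_sub_cancel a b, gammaKernel_add ht.1, add_sub_cancel]; ring
  have hR : ∀ y ≤ 1, ∫ t in Ioo 0 y, gammaKernel a t * B t =
      C a * (∫ t in Ioo 0 y, gammaKernel b t) - C b * ∫ t in Ioo 0 y, gammaKernel a t :=
    fun y hy => by
    rw [setIntegral_congr_fun measurableSet_Ioo fun t ht => hkernel t ⟨ht.1, ht.2.trans_le hy⟩,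
      integral_sub ((hint hb y hy).const_mul _) ((hint ha y hy).const_mul _),
      integral_const_mul, integral_const_mul]
  have hR1 :
      C a * (∫ t in Ioo 0 1, gammaKernel b t) - C b * ∫ t in Ioo 0 1, gammaKernel a t ≤ 0 := by
    simp only [C, integral_gammaKernel_eq_add ha, integral_gammaKernel_eq_add hb]
    linarith [integral_Ioo_gammaKernel_mul_integral_Ioi_le ha hab]
  have hB : MonotoneOn B (Ioo 0 1) := fun _ hs _ ht hst =>
    sub_le_sub_right (mul_le_mul_of_nonneg_left
      (monotoneOn_exp_neg_mul_subLog (sub_nonneg.2 hab) hs ht hst)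
      (integral_gammaKernel_pos ha).le) _
  have hmain := setIntegral_Ioo_le_max_of_monotoneOn hx (fun t ht => gammaKernel_nonneg ht.1.le)
    hB (IntegrableOn.congr_fun
      (((hint hb 1 le_rfl).const_mul _).sub ((hint ha 1 le_rfl).const_mul _))
      (fun t ht => (hkernel t ht).symm) measurableSet_Ioo)
  rw [hR x hx, hR 1 le_rfl, max_eq_left hR1] at hmain
  rw [unitMeanGammaCDF, unitMeanGammaCDF,
    div_le_div_iff₀ (integral_gammaKernel_pos hb) (integral_gammaKernel_pos ha)]
  linarith

section variance

variable {s : ℝ}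

lemma gammaKernel_mul_sub_one_sq {t : ℝ} (ht : 0 < t) :
    gammaKernel s t * (t - 1) ^ 2 = t ^ (s + 2 - 1) * exp (-(s * t))
      - 2 * (t ^ (s + 1 - 1) * exp (-(s * t))) + gammaKernel s t := by
  rw [gammaKernel, show s + 2 - 1 = s - 1 + 2 by ring, show s + 1 - 1 = s - 1 + 1 by ring,
    rpow_add ht, rpow_add ht, rpow_one, rpow_two]
  ring

lemma integrableOn_gammaKernel_mul_sub_one_sq (hs : 0 < s) :
    IntegrableOn (fun t => gammaKernel s t * (t - 1) ^ 2) (Ioi 0) :=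
  IntegrableOn.congr_fun (((integrableOn_rpow_mul_exp_neg_mul_Ioi (by linarith) hs).sub
      ((integrableOn_rpow_mul_exp_neg_mul_Ioi (by linarith) hs).const_mul 2)).add
      (integrableOn_gammaKernel hs))
    (fun _ ht => (gammaKernel_mul_sub_one_sq ht).symm) measurableSet_Ioi

lemma integral_gammaKernel_mul_sub_one_sq (hs : 0 < s) :
    ∫ t in Ioi 0, gammaKernel s t * (t - 1) ^ 2 = (∫ t in Ioi 0, gammaKernel s t) / s := by
  have h1 := integrableOn_rpow_mul_exp_neg_mul_Ioi (a := s + 1) (by linarith) hs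
  have h2 := integrableOn_rpow_mul_exp_neg_mul_Ioi (a := s + 2) (by linarith) hs
  rw [setIntegral_congr_fun measurableSet_Ioi fun _ ht => gammaKernel_mul_sub_one_sq ht,
    integral_add, integral_sub, integral_const_mul,
    integral_rpow_mul_exp_neg_mul_Ioi (by linarith) hs,
    integral_rpow_mul_exp_neg_mul_Ioi (by linarith) hs, integral_gammaKernel hs,
    show s + 2 = (s + 1) + 1 by ring, Gamma_add_one (by linarith), Gamma_add_one hs.ne',
    rpow_add (by positivity), rpow_add (by positivity), rpow_one]
  · field_simp
    ring
  exacts [h2, h1.const_mul 2, h2.sub (h1.const_mul 2), integrableOn_gammaKernel hs]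

theorem unitMeanGammaCDF_le_one_div {β : ℝ} (hs : 0 < s) (hβ : β < 1) :
    unitMeanGammaCDF s β ≤ 1 / (s * (1 - β) ^ 2) := by
  have hint := integrableOn_gammaKernel_mul_sub_one_sq hs
  have hmoment : (1 - β) ^ 2 * ∫ t in Ioo 0 β, gammaKernel s t ≤
      ∫ t in Ioi 0, gammaKernel s t * (t - 1) ^ 2 := calc
    _ = ∫ t in Ioo 0 β, (1 - β) ^ 2 * gammaKernel s t := (integral_const_mul _ _).symm
    _ ≤ ∫ t in Ioo 0 β, gammaKernel s t * (t - 1) ^ 2 := by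
      refine setIntegral_mono_on
        (((integrableOn_gammaKernel hs).mono_set Ioo_subset_Ioi_self).const_mul _)
        (hint.mono_set Ioo_subset_Ioi_self) measurableSet_Ioo fun t ht => ?_
      rw [mul_comm]
      exact mul_le_mul_of_nonneg_left (by nlinarith [ht.2]) (gammaKernel_nonneg ht.1.le)
    _ ≤ _ := setIntegral_mono_set hint
      ((ae_restrict_iff' measurableSet_Ioi).2 (ae_of_all _ fun t (ht : 0 < t) =>
        mul_nonneg (gammaKernel_nonneg ht.le) (sq_nonneg _)))
      Ioo_subset_Ioi_self.eventuallyLE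
  rw [integral_gammaKernel_mul_sub_one_sq hs, le_div_iff₀ hs] at hmoment
  rw [unitMeanGammaCDF, div_le_div_iff₀ (integral_gammaKernel_pos hs)
    (mul_pos hs (pow_pos (sub_pos.2 hβ) 2))]
  linarith

end variance

theorem setIntegral_rpow_mul_exp_neg_div_Gamma {s : ℝ} (hs : 0 < s) (x : ℝ) :
    (∫ t in Ioo 0 (x * s), t ^ (s - 1) * exp (-t)) / Gamma s = unitMeanGammaCDF s x := by
  have hscale : ∫ t in Ioo 0 (x * s), t ^ (s - 1) * exp (-t) =
      s ^ s * ∫ u in Ioo 0 x, gammaKernel s u := by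
    have himage : (· * s) '' Ioo 0 x = Ioo 0 (x * s) := by
      rw [image_mul_right_Ioo 0 x hs, zero_mul]
    rw [← himage,
      integral_image_eq_integral_abs_deriv_smul measurableSet_Ioo
        (fun u _ => (hasDerivAt_mul_const s).hasDerivWithinAt) (mul_left_injective₀ hs.ne').injOn,
      ← integral_const_mul]
    refine setIntegral_congr_fun measurableSet_Ioo fun u hu => ?_
    rw [smul_eq_mul, abs_of_pos hs, gammaKernel, mul_rpow hu.1.le hs.le, rpow_sub_one hs.ne',
      mul_comm u s]
    field_simp
  rw [hscale, unitMeanGammaCDF, integral_gammaKernel hs, one_div, inv_rpow hs.le]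
  have := Gamma_pos_of_pos hs
  field_simp

lemma alphaSeq_succ_eq (δ : ℝ) (k : ℕ) :
    alphaSeq δ (k + 1) =
      sSup {α | α ∈ Ioo 0 1 ∧ unitMeanGammaCDF ((k + 1 : ℕ) / 2) α ≤ δ} := by
  rw [alphaSeq]
  congr! 4 with α
  rw [mul_div_assoc, setIntegral_rpow_mul_exp_neg_div_Gamma (by positivity)]

lemma bddAbove_setOf_mem_Ioo_and {p : ℝ → Prop} : BddAbove {α | α ∈ Ioo (0 : ℝ) 1 ∧ p α} :=
  ⟨1, fun _ hα => hα.1.2.le⟩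

theorem monotone_alphaSeq_succ (δ : ℝ) : Monotone fun k : ℕ => alphaSeq δ (k + 1) := by
  intro m n hmn
  simp only [alphaSeq_succ_eq]
  rcases eq_empty_or_nonempty
    {α | α ∈ Ioo (0 : ℝ) 1 ∧ unitMeanGammaCDF ((m + 1 : ℕ) / 2) α ≤ δ} with hempty | hne
  · rw [hempty, Real.sSup_empty]
    exact Real.sSup_nonneg fun _ hα => hα.1.1.le
  · refine csSup_le_csSup bddAbove_setOf_mem_Ioo_and hne fun α ⟨hα, hle⟩ => ⟨hα, ?_⟩
    exact (unitMeanGammaCDF_le_of_le (by positivity) (by gcongr) hα.2.le).trans hle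

theorem tendsto_alphaSeq_succ {δ : ℝ} (hδ : 0 < δ) :
    Tendsto (fun k : ℕ => alphaSeq δ (k + 1)) atTop (𝓝 1) := by
  refine tendsto_order.2 ⟨fun β hβ => ?_, fun β hβ => Eventually.of_forall fun k => ?_⟩
  · obtain ⟨γ, hγ, hγ1⟩ := exists_between (max_lt hβ (zero_lt_one : (0 : ℝ) < 1))
    have hdiv : Tendsto (fun k : ℕ => ((k + 1 : ℕ) : ℝ) / 2 * (1 - γ) ^ 2) atTop atTop :=
      ((tendsto_natCast_atTop_atTop.comp (tendsto_add_atTop_nat 1)).atTop_div_const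
        two_pos).atTop_mul_const (pow_pos (sub_pos.2 hγ1) 2)
    filter_upwards [hdiv.inv_tendsto_atTop.eventually (gt_mem_nhds hδ)] with k hk
    rw [alphaSeq_succ_eq]
    refine ((le_max_left _ _).trans_lt hγ).trans_le (le_csSup bddAbove_setOf_mem_Ioo_and
      ⟨⟨(le_max_right _ _).trans_lt hγ, hγ1⟩, ?_⟩)
    rw [← one_div] at hk
    exact (unitMeanGammaCDF_le_one_div (by positivity) hγ1).trans hk.le
  · rw [alphaSeq_succ_eq]
    exact (Real.sSup_le (fun _ hα => hα.1.2.le) zero_le_one).trans_lt hβ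

end

/-- The sequence `{α_k}` is monotonically increasing in `k` and converges to `1`. -/
theorem stmt_3 (δ : ℝ) (hδ : δ ∈ Set.Ioo (0 : ℝ) 1) :
    (Monotone fun k : ℕ => alphaSeq δ (k + 1)) ∧
    Filter.Tendsto (fun k : ℕ => alphaSeq δ (k + 1)) Filter.atTop (nhds 1) :=
  ⟨monotone_alphaSeq_succ δ, tendsto_alphaSeq_succ hδ.1⟩
end

section
/- For all x ≥ 0, exp(x)/√(1+2x) ≤ exp(x²). Moreover, for x ∈ (−1/2, 0], exp(x)/√(1+2x) ≥ exp(x²); in particular, for x ∈ [0, 1/2), exp(−x)/√(1−2x) ≥ exp(x²). -/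
/-!
Taking logarithms, both inequalities compare `x ^ 2` with `x - log (1 + 2x) / 2`, i.e. they say
that `logGap x = x ^ 2 - x + log (1 + 2x) / 2` has the sign of `x` on `(-1/2, ∞)`. This holds
because `logGap 0 = 0` and `logGap' x = 4x ^ 2 / (1 + 2x) ≥ 0`. The last inequality is the
second one at `-x`.
-/

open Real Set

noncomputable def logGap (x : ℝ) : ℝ := x ^ 2 - x + log (1 + 2 * x) / 2

lemma hasDerivAt_logGap {x : ℝ} (hx : 0 < 1 + 2 * x) :
    HasDerivAt logGap (4 * x ^ 2 / (1 + 2 * x)) x := by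
  have hlin : HasDerivAt (fun y : ℝ => 1 + 2 * y) 2 x := by
    simpa using ((hasDerivAt_id x).const_mul 2).const_add 1
  have hpoly : HasDerivAt (fun y : ℝ => y ^ 2 - y) (2 * x - 1) x :=
    ((hasDerivAt_pow 2 x).sub (hasDerivAt_id' x)).congr_deriv (by norm_num)
  refine (hpoly.add ((hlin.log hx.ne').div_const 2)).congr_deriv ?_
  field_simp
  ring

lemma monotoneOn_logGap : MonotoneOn logGap (Ioi (-(1 / 2))) := by
  have hderiv : ∀ x ∈ Ioi (-(1 / 2) : ℝ), HasDerivAt logGap (4 * x ^ 2 / (1 + 2 * x)) x :=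
    fun x hx => hasDerivAt_logGap (by rw [mem_Ioi] at hx; linarith)
  refine monotoneOn_of_deriv_nonneg (convex_Ioi _)
    (fun x hx => (hderiv x hx).continuousAt.continuousWithinAt) ?_ ?_ <;> rw [interior_Ioi]
  · exact fun x hx => (hderiv x hx).differentiableAt.differentiableWithinAt
  · intro x hx
    have hpos : 0 < 1 + 2 * x := by rw [mem_Ioi] at hx; linarith
    rw [(hderiv x hx).deriv]
    positivity

lemma logGap_zero : logGap 0 = 0 := by simp [logGap]

lemma logGap_nonneg {x : ℝ} (hx : 0 ≤ x) : 0 ≤ logGap x :=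
  logGap_zero ▸ monotoneOn_logGap (by norm_num) (by rw [mem_Ioi]; linarith) hx

lemma logGap_nonpos {x : ℝ} (hx : -(1 / 2) < x) (hx0 : x ≤ 0) : logGap x ≤ 0 :=
  logGap_zero ▸ monotoneOn_logGap hx (by norm_num) hx0

lemma exp_div_sqrt_eq {x : ℝ} (hx : 0 < 1 + 2 * x) :
    exp x / √(1 + 2 * x) = exp (x ^ 2 - logGap x) := by
  rw [← exp_log hx, sqrt_eq_rpow, ← exp_mul, ← exp_sub, logGap]
  ring_nf

lemma exp_div_sqrt_le_exp_sq {x : ℝ} (hx : 0 ≤ x) : exp x / √(1 + 2 * x) ≤ exp (x ^ 2) := by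
  rw [exp_div_sqrt_eq (by linarith), exp_le_exp]
  linarith [logGap_nonneg hx]

lemma exp_sq_le_exp_div_sqrt {x : ℝ} (hx : -(1 / 2) < x) (hx0 : x ≤ 0) :
    exp (x ^ 2) ≤ exp x / √(1 + 2 * x) := by
  rw [exp_div_sqrt_eq (by linarith), exp_le_exp]
  linarith [logGap_nonpos hx hx0]

/-- For `x ≥ 0`, `exp(x)/√(1+2x) ≤ exp(x²)`; for `x ∈ (−1/2,0]`,
`exp(x)/√(1+2x) ≥ exp(x²)`; in particular, for `x ∈ [0,1/2)`,
`exp(−x)/√(1−2x) ≥ exp(x²)`. -/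
theorem stmt_8 :
    (∀ x : ℝ, 0 ≤ x → Real.exp x / Real.sqrt (1 + 2 * x) ≤ Real.exp (x ^ 2)) ∧
    (∀ x : ℝ, -(1 / 2) < x → x ≤ 0 →
      Real.exp (x ^ 2) ≤ Real.exp x / Real.sqrt (1 + 2 * x)) ∧
    (∀ x : ℝ, 0 ≤ x → x < 1 / 2 →
      Real.exp (x ^ 2) ≤ Real.exp (-x) / Real.sqrt (1 - 2 * x)) := by
  refine ⟨fun x hx => exp_div_sqrt_le_exp_sq hx, fun x hx hx0 => exp_sq_le_exp_div_sqrt hx hx0,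
    fun x hx hx2 => ?_⟩
  have h := exp_sq_le_exp_div_sqrt (x := -x) (by linarith) (by linarith)
  rwa [neg_sq, mul_neg, ← sub_eq_add_neg] at h
end
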